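/- Let M ≥ 2, let A = (A_1,…,A_M) be an irreducible tuple of d_1×d_1 real matrices and B = (B_1,…,B_M) an irreducible tuple of d_2×d_2 real matrices, let s, t > 0, and suppose P(A,s) > −∞ and P(B,t) > −∞. If there is a constant C > 0 such that C^{−1} e^{−nP(A,s)} ‖A_{i_n}⋯A_{i_1}‖^s ≤ e^{−nP(B,t)} ‖B_{i_n}⋯B_{i_1}‖^t ≤ C e^{−nP(A,s)} ‖A_{i_n}⋯A_{i_1}‖^s for every n ≥ 1 and all i_1,…,i_n ∈ {1,…,M}, then e^{−nP(A,s)} ρ(A_{i_n}⋯A_{i_1})^s = e^{−nP(B,t)} ρ(B_{i_n}⋯B_{i_1})^t for every n ≥ 1 and all i_1,…,i_n ∈ {1,…,M}. -/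

import Mathlib

open MeasureTheory Filter Topology

/-- The operator norm on square real matrices induced by the Euclidean norm. -/
noncomputable def opNorm {n : Type*} [Fintype n] [DecidableEq n]
    (X : Matrix n n ℝ) : ℝ :=
  ‖Matrix.toEuclideanCLM (𝕜 := ℝ) X‖

/-- The spectral radius `ρ(X) = inf_{k ≥ 1} ‖X^k‖^(1/k)` (Gelfand). -/
noncomputable def specRad {n : Type*} [Fintype n] [DecidableEq n]
    (X : Matrix n n ℝ) : ℝ :=
  ⨅ k : ℕ, opNorm (X ^ (k + 1)) ^ ((1 : ℝ) / (k + 1))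

/-- The product `A_{x_n} ⋯ A_{x_1}` associated to the word `x = (x_1, …, x_n)`. -/
noncomputable def wordProd {M d n : ℕ} (A : Fin M → Matrix (Fin d) (Fin d) ℝ)
    (x : Fin n → Fin M) : Matrix (Fin d) (Fin d) ℝ :=
  (List.ofFn (fun i => A (x i))).reverse.prod

/-- The product `A_{x_n} ⋯ A_{x_1}` associated to the word `w = [x_1, …, x_n]`. -/
noncomputable def listProd {M d : ℕ} (A : Fin M → Matrix (Fin d) (Fin d) ℝ)
    (w : List (Fin M)) : Matrix (Fin d) (Fin d) ℝ :=
  ((w.map A).reverse).prod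

/-- Irreducibility: no invariant subspace `U` with `0 < dim U < d`. -/
def IsIrredTuple {M d : ℕ} (A : Fin M → Matrix (Fin d) (Fin d) ℝ) : Prop :=
  ¬ ∃ U : Submodule ℝ (Fin d → ℝ),
      (∀ i, U.map (A i).mulVecLin ≤ U) ∧ U ≠ ⊥ ∧ U ≠ ⊤

/-- The shift map on `Σ_M = {1,…,M}^ℕ`. -/
def shift {M : ℕ} : (ℕ → Fin M) → (ℕ → Fin M) := fun x n => x (n + 1)

/-- The cylinder set `[x_1 ⋯ x_n]` determined by the word `w = [x_1, …, x_n]`. -/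
def cyl {M : ℕ} (w : List (Fin M)) : Set (ℕ → Fin M) :=
  {y | ∀ i : Fin w.length, y (i : ℕ) = w.get i}

/-- The Gibbs inequality for `(A, s)` with constants `C > 0`, `P ∈ ℝ`. -/
def IsGibbs {M d : ℕ} (A : Fin M → Matrix (Fin d) (Fin d) ℝ) (s C P : ℝ)
    (μ : Measure (ℕ → Fin M)) : Prop :=
  ∀ w : List (Fin M), w ≠ [] →
    C⁻¹ * (μ (cyl w)).toReal ≤ Real.exp (-(w.length : ℝ) * P) * opNorm (listProd A w) ^ s ∧
    Real.exp (-(w.length : ℝ) * P) * opNorm (listProd A w) ^ s ≤ C * (μ (cyl w)).toReal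

/-- The pressure `P(A,s) = inf_{n ≥ 1} (1/n) log Σ_{|x| = n} ‖A_{x_n} ⋯ A_{x_1}‖^s ∈ [-∞, ∞)`,
with the convention that a term is `-∞` when the corresponding sum vanishes. -/
noncomputable def pressure {M d : ℕ} (A : Fin M → Matrix (Fin d) (Fin d) ℝ) (s : ℝ) : EReal :=
  ⨅ n : ℕ,
    if (∑ x : Fin (n + 1) → Fin M, opNorm (wordProd A x) ^ s) = 0 then (⊥ : EReal)
    else ((Real.log (∑ x : Fin (n + 1) → Fin M, opNorm (wordProd A x) ^ s) / (n + 1) : ℝ) : EReal)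

/-!
Apply the hypothesis to the word `x` repeated `k` times: the normalised norms
`e^{-knP(A,s)} ‖X^k‖^s` and `e^{-knP(B,t)} ‖Y^k‖^t` of the powers of `X = A_x` and `Y = B_x` agree
up to the fixed factor `C`. With `r = e^{-nP(A,s)} ρ(X)^s`, the bound `ρ(X)^k ≤ ‖X^k‖` and
submultiplicativity along `Y^{mj} = (Y^m)^j` give `(r^m)^j ≤ C (e^{-mnP(B,t)} ‖Y^m‖^t)^j` for all `j`.
As `C` does not grow with `j`, this forces `r^m ≤ e^{-mnP(B,t)} ‖Y^m‖^t` for every `m`, that is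
`r ≤ e^{-nP(B,t)} ρ(Y)^t` since `ρ(Y) = inf_m ‖Y^m‖^{1/m}`. The reverse inequality is symmetric.
-/

open Real

section MatrixNorms

variable {ι κ : Type*} [Fintype ι] [DecidableEq ι] [Fintype κ] [DecidableEq κ]

lemma opNorm_nonneg (X : Matrix ι ι ℝ) : 0 ≤ opNorm X := norm_nonneg _

lemma opNorm_pow_le (X : Matrix ι ι ℝ) {k : ℕ} (hk : 0 < k) : opNorm (X ^ k) ≤ opNorm X ^ k := by
  rw [opNorm, opNorm, map_pow]
  exact norm_pow_le' _ hk

lemma specRad_nonneg (X : Matrix ι ι ℝ) : 0 ≤ specRad X :=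
  le_ciInf fun _ => rpow_nonneg (opNorm_nonneg _) _

lemma le_specRad_iff {X : Matrix ι ι ℝ} {q : ℝ} (hq : 0 ≤ q) :
    q ≤ specRad X ↔ ∀ k : ℕ, 0 < k → q ^ k ≤ opNorm (X ^ k) := by
  have hbdd : BddBelow (Set.range fun k : ℕ => opNorm (X ^ (k + 1)) ^ ((1 : ℝ) / (k + 1))) :=
    ⟨0, by rintro _ ⟨k, rfl⟩; exact rpow_nonneg (opNorm_nonneg _) _⟩
  have hroot (k : ℕ) : q ≤ opNorm (X ^ (k + 1)) ^ ((1 : ℝ) / (k + 1)) ↔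
      q ^ (k + 1) ≤ opNorm (X ^ (k + 1)) := by
    rw [one_div, le_rpow_inv_iff_of_pos hq (opNorm_nonneg _) (by positivity), ← Nat.cast_succ,
      rpow_natCast]
  rw [specRad, le_ciInf_iff hbdd]
  simp only [hroot]
  refine ⟨fun H k hk => ?_, fun H k => H (k + 1) k.succ_pos⟩
  obtain ⟨k, rfl⟩ := Nat.exists_eq_add_one.2 hk
  exact H k

lemma exp_mul_rpow_pow {q : ℝ} (hq : 0 ≤ q) (a s : ℝ) (k : ℕ) :
    (exp (-a) * q ^ s) ^ k = exp (-(k : ℝ) * a) * (q ^ k) ^ s := by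
  rw [mul_pow, ← exp_nat_mul, rpow_pow_comm hq, mul_neg, neg_mul]

lemma le_exp_mul_specRad_rpow_iff {X : Matrix ι ι ℝ} {r a s : ℝ} (hr : 0 ≤ r) (hs : 0 < s) :
    r ≤ exp (-a) * specRad X ^ s ↔
      ∀ k : ℕ, 0 < k → r ^ k ≤ exp (-(k : ℝ) * a) * opNorm (X ^ k) ^ s := by
  obtain ⟨q, hq, rfl⟩ : ∃ q, 0 ≤ q ∧ r = exp (-a) * q ^ s := by
    refine ⟨(r * exp a) ^ s⁻¹, by positivity, ?_⟩
    rw [rpow_inv_rpow (by positivity) hs.ne', mul_left_comm, ← exp_add, neg_add_cancel, exp_zero,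
      mul_one]
  rw [mul_le_mul_iff_right₀ (exp_pos _), rpow_le_rpow_iff hq (specRad_nonneg X) hs,
    le_specRad_iff hq]
  refine forall₂_congr fun k _ => ?_
  rw [exp_mul_rpow_pow hq, mul_le_mul_iff_right₀ (exp_pos _),
    rpow_le_rpow_iff (pow_nonneg hq k) (opNorm_nonneg _) hs]

lemma exp_mul_opNorm_pow_mul_le (Y : Matrix ι ι ℝ) (b : ℝ) {t : ℝ} (ht : 0 ≤ t) (m : ℕ)
    {j : ℕ} (hj : 0 < j) :
    exp (-((m * j : ℕ) : ℝ) * b) * opNorm (Y ^ (m * j)) ^ t ≤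
      (exp (-(m : ℝ) * b) * opNorm (Y ^ m) ^ t) ^ j := by
  rw [mul_pow, ← exp_nat_mul, rpow_pow_comm (opNorm_nonneg (Y ^ m)), pow_mul]
  have hexp : -((m * j : ℕ) : ℝ) * b = j * (-(m : ℝ) * b) := by push_cast; ring
  rw [hexp]
  gcongr
  exacts [opNorm_nonneg _, opNorm_pow_le (Y ^ m) hj]

lemma le_of_forall_pow_le_mul_pow {x y C : ℝ} (hy : 0 ≤ y)
    (h : ∀ j : ℕ, 0 < j → x ^ j ≤ C * y ^ j) : x ≤ y := by
  by_contra! hyx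
  rcases hy.eq_or_lt with rfl | hy
  · have := h 1 one_pos
    simp only [pow_one, mul_zero] at this
    linarith
  have hxy : 1 < x / y := (one_lt_div hy).2 hyx
  obtain ⟨j, hj⟩ := pow_unbounded_of_one_lt C hxy
  have hle : (x / y) ^ (j + 1) ≤ C := by
    rw [div_pow, div_le_iff₀ (by positivity)]
    exact h (j + 1) j.succ_pos
  exact (hj.trans_le (pow_le_pow_right₀ hxy.le j.le_succ)).not_ge hle

theorem exp_mul_specRad_rpow_le (X : Matrix ι ι ℝ) (Y : Matrix κ κ ℝ) {s t a b C : ℝ}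
    (hs : 0 < s) (ht : 0 < t) (hC : 0 ≤ C)
    (h : ∀ k : ℕ, 0 < k →
      exp (-(k : ℝ) * a) * opNorm (X ^ k) ^ s ≤ C * (exp (-(k : ℝ) * b) * opNorm (Y ^ k) ^ t)) :
    exp (-a) * specRad X ^ s ≤ exp (-b) * specRad Y ^ t := by
  set r := exp (-a) * specRad X ^ s
  have hr : 0 ≤ r := mul_nonneg (exp_pos _).le (rpow_nonneg (specRad_nonneg X) _)
  have hX := (le_exp_mul_specRad_rpow_iff hr hs).1 le_rfl
  refine (le_exp_mul_specRad_rpow_iff hr ht).2 fun m hm => ?_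
  refine le_of_forall_pow_le_mul_pow (C := C)
    (mul_nonneg (exp_pos _).le (rpow_nonneg (opNorm_nonneg _) _)) fun j hj => ?_
  have hmj : 0 < m * j := Nat.mul_pos hm hj
  calc (r ^ m) ^ j = r ^ (m * j) := (pow_mul r m j).symm
    _ ≤ exp (-((m * j : ℕ) : ℝ) * a) * opNorm (X ^ (m * j)) ^ s := hX _ hmj
    _ ≤ C * (exp (-((m * j : ℕ) : ℝ) * b) * opNorm (Y ^ (m * j)) ^ t) := h _ hmj
    _ ≤ C * (exp (-(m : ℝ) * b) * opNorm (Y ^ m) ^ t) ^ j := by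
      gcongr
      exact exp_mul_opNorm_pow_mul_le Y b ht.le m hj

end MatrixNorms

section Words

variable {M d : ℕ} (A : Fin M → Matrix (Fin d) (Fin d) ℝ)

lemma listProd_append (w v : List (Fin M)) : listProd A (w ++ v) = listProd A v * listProd A w := by
  simp [listProd]

lemma listProd_flatten_replicate (w : List (Fin M)) (k : ℕ) :
    listProd A (List.replicate k w).flatten = listProd A w ^ k := by
  induction k with
  | zero => simp [listProd]
  | succ k ih => rw [List.replicate_succ, List.flatten_cons, listProd_append, ih, pow_succ]

lemma listProd_ofFn {n : ℕ} (x : Fin n → Fin M) : listProd A (List.ofFn x) = wordProd A x := by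
  rw [listProd, wordProd, List.map_ofFn]
  rfl

lemma wordProd_get (w : List (Fin M)) : wordProd A w.get = listProd A w := by
  rw [← listProd_ofFn, List.ofFn_get]

lemma wordProd_get_flatten_replicate {n : ℕ} (x : Fin n → Fin M) (k : ℕ) :
    wordProd A (List.replicate k (List.ofFn x)).flatten.get = wordProd A x ^ k := by
  rw [wordProd_get, listProd_flatten_replicate, listProd_ofFn]

end Words

theorem stmt_10_general {M d₁ d₂ : ℕ}
    (A : Fin M → Matrix (Fin d₁) (Fin d₁) ℝ) (B : Fin M → Matrix (Fin d₂) (Fin d₂) ℝ)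
    (s t : ℝ) (hs : 0 < s) (ht : 0 < t)
    (C : ℝ) (hC : 0 < C)
    (h : ∀ n : ℕ, 0 < n → ∀ x : Fin n → Fin M,
      C⁻¹ * (Real.exp (-(n : ℝ) * (pressure A s).toReal) * opNorm (wordProd A x) ^ s) ≤
          Real.exp (-(n : ℝ) * (pressure B t).toReal) * opNorm (wordProd B x) ^ t ∧
        Real.exp (-(n : ℝ) * (pressure B t).toReal) * opNorm (wordProd B x) ^ t ≤
          C * (Real.exp (-(n : ℝ) * (pressure A s).toReal) * opNorm (wordProd A x) ^ s)) :
    ∀ n : ℕ, 0 < n → ∀ x : Fin n → Fin M,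
      Real.exp (-(n : ℝ) * (pressure A s).toReal) * specRad (wordProd A x) ^ s =
        Real.exp (-(n : ℝ) * (pressure B t).toReal) * specRad (wordProd B x) ^ t := by
  intro n hn x
  set PA := (pressure A s).toReal
  set PB := (pressure B t).toReal
  have hpow (k : ℕ) (hk : 0 < k) :
      C⁻¹ * (exp (-(k : ℝ) * (n * PA)) * opNorm (wordProd A x ^ k) ^ s) ≤
          exp (-(k : ℝ) * (n * PB)) * opNorm (wordProd B x ^ k) ^ t ∧
        exp (-(k : ℝ) * (n * PB)) * opNorm (wordProd B x ^ k) ^ t ≤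
          C * (exp (-(k : ℝ) * (n * PA)) * opNorm (wordProd A x ^ k) ^ s) := by
    have hlen : (List.replicate k (List.ofFn x)).flatten.length = k * n := by simp
    have hw := h _ (hlen ▸ Nat.mul_pos hk hn) (List.replicate k (List.ofFn x)).flatten.get
    simpa only [wordProd_get_flatten_replicate, hlen, Nat.cast_mul, neg_mul, mul_assoc] using hw
  have hAB := exp_mul_specRad_rpow_le (wordProd A x) (wordProd B x) hs ht hC.le
    fun k hk => (inv_mul_le_iff₀ hC).1 (hpow k hk).1
  have hBA := exp_mul_specRad_rpow_le (wordProd B x) (wordProd A x) ht hs hC.le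
    fun k hk => (hpow k hk).2
  simpa only [neg_mul] using le_antisymm hAB hBA

/-- norm-equivalence of normalised potentials implies equality of normalised
spectral radii (Theorem 4.1, (ii) ⟹ (iii)). -/
theorem stmt_10 {M d₁ d₂ : ℕ} (hM : 2 ≤ M)
    (A : Fin M → Matrix (Fin d₁) (Fin d₁) ℝ) (B : Fin M → Matrix (Fin d₂) (Fin d₂) ℝ)
    (hA : IsIrredTuple A) (hB : IsIrredTuple B)
    (s t : ℝ) (hs : 0 < s) (ht : 0 < t)
    (hPA : ⊥ < pressure A s) (hPB : ⊥ < pressure B t)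
    (C : ℝ) (hC : 0 < C)
    (h : ∀ n : ℕ, 0 < n → ∀ x : Fin n → Fin M,
      C⁻¹ * (Real.exp (-(n : ℝ) * (pressure A s).toReal) * opNorm (wordProd A x) ^ s) ≤
          Real.exp (-(n : ℝ) * (pressure B t).toReal) * opNorm (wordProd B x) ^ t ∧
        Real.exp (-(n : ℝ) * (pressure B t).toReal) * opNorm (wordProd B x) ^ t ≤
          C * (Real.exp (-(n : ℝ) * (pressure A s).toReal) * opNorm (wordProd A x) ^ s)) :
    ∀ n : ℕ, 0 < n → ∀ x : Fin n → Fin M,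
      Real.exp (-(n : ℝ) * (pressure A s).toReal) * specRad (wordProd A x) ^ s =
        Real.exp (-(n : ℝ) * (pressure B t).toReal) * specRad (wordProd B x) ^ t :=
  stmt_10_general A B s t hs ht C hC h
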